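/- arXiv:1501.06318 — 2 statements merged into one kernel-verified Lean document; each statement's English description precedes it below -/
import Mathlib

section
/- Let U ∈ ℝ^{d×k} be a matrix with orthonormal columns u_1,…,u_k (UᵀU = I_k), let Λ_1,…,Λ_L ∈ ℝ^{k×k} be diagonal matrices with diagonal entries λ_{1l},…,λ_{kl} for l = 1,…,L, let R_1,…,R_L ∈ ℝ^{d×d} be symmetric matrices with Frobenius norm at most 1, and for ε > 0 set M_l(ε) = U Λ_l Uᵀ + ε R_l. Let Ū ∈ O(d) be an orthogonal extension of U with columns u_1,…,u_d, and define λ_{il} = 0 for k < i ≤ d. Define E ∈ ℝ^{d×k} by E_{ij} = (Σ_{l=1}^L (λ_{il} − λ_{jl}) u_jᵀ R_l u_i) / (Σ_{l=1}^L (λ_{il} − λ_{jl})²) for i ≠ j (assuming each such denominator is nonzero), and E_{jj} = 0. Suppose that for each ε > 0, Ũ(ε) ∈ O(d) is a global minimizer over the orthogonal group O(d) of the joint diagonalization objective F(V, ε) = Σ_{l=1}^L Σ_{i≠j} (Vᵀ M_l(ε) V)_{ij}². Then for every j ∈ {1,…,k}, limsup_{ε→0⁺} (1/ε) · min_{i∈{1,…,d},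 s∈{−1,1}} ‖s·ũ_i(ε) − u_j‖₂ ≤ √(Σ_{i=1}^d E_{ij}²), where ũ_1(ε),…,ũ_d(ε) denote the columns of Ũ(ε). (That is, ‖ũ_j − u_j‖₂ ≤ ε √(Σ_{i=1}^d E_{ij}²) + o(ε) for some column ũ_j of the minimizer, up to sign.) -/
/-!
Write everything in the basis `Ū`: the matrices become `Λ_l + ε S_l` with `S_l = Ūᵀ R_l Ū` and
the minimizer becomes `W(ε) = Ūᵀ Ũ(ε)`. Comparing with `V = Ū` shows that the off-diagonal part
of `B_l = W(ε)ᵀ (Λ_l + ε S_l) W(ε)` is `O(ε)`, so every limit point `P` of `W(ε)` as `ε → 0`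
diagonalizes all `Λ_l`; as the eigenvalue vector `λ_{·j}` is simple, some column `q` of `P` is
`σ e_j` with `σ = ±1`. Minimality against Givens rotations in the `(p, q)`-plane gives the
first-order conditions `∑_l B_pq (B_pp - B_qq) = 0`. Rescale the error `y = σ w_q - e_j` of the
`q`-th column of `W(ε)` by its length `h`: in the limit, `z = y / h` and `t = ε / h` satisfy the
linearized conditions, which say that `Pᵀ z = -t Pᵀ E_{·j}` off the `q`-th coordinate while
`(Pᵀ z)_q = σ z_j = 0`; hence `1 = ‖z‖ ≤ t ‖E_{·j}‖`. If the distance stayed above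
`(‖E_{·j}‖ + δ) ε`, then `t ≤ 1 / (‖E_{·j}‖ + δ)`, a contradiction.
Limits are taken along ultrafilters, which avoids extracting subsequences.
-/

open Filter Matrix Finset Topology

namespace JointDiagonalization

section Orthogonal

lemma isCompact_cube {ι : Type*} : IsCompact {v : ι → ℝ | ∀ i, |v i| ≤ 1} := by
  simpa only [abs_le, ← Set.mem_Icc, Set.pi, Set.mem_univ, true_implies] using
    isCompact_univ_pi fun _ : ι => isCompact_Icc (a := (-1 : ℝ)) (b := 1)

variable {n : Type*} [Fintype n]

lemma dotProduct_self_nonneg (v : n → ℝ) : 0 ≤ v ⬝ᵥ v :=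
  sum_nonneg fun i _ => mul_self_nonneg (v i)

lemma abs_apply_le_one_of_dotProduct_self {v : n → ℝ} (hv : v ⬝ᵥ v = 1) (i : n) :
    |v i| ≤ 1 := by
  rw [← sq_le_one_iff_abs_le_one, ← hv, sq]
  exact single_le_sum (f := fun j => v j * v j) (fun j _ => mul_self_nonneg (v j)) (mem_univ i)

lemma dotProduct_self_inv_sqrt_smul {y : n → ℝ} (hy : y ⬝ᵥ y ≠ 0) :
    ((√(y ⬝ᵥ y))⁻¹ • y) ⬝ᵥ ((√(y ⬝ᵥ y))⁻¹ • y) = 1 := by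
  rw [smul_dotProduct, dotProduct_smul, smul_eq_mul, smul_eq_mul, ← mul_assoc, ← mul_inv,
    Real.mul_self_sqrt (dotProduct_self_nonneg y), inv_mul_cancel₀ hy]

lemma isCompact_unitSphere : IsCompact {v : n → ℝ | v ⬝ᵥ v = 1} :=
  isCompact_cube.of_isClosed_subset (isClosed_eq (by fun_prop) continuous_const)
    fun _ hv => abs_apply_le_one_of_dotProduct_self hv

lemma sum_sq_eq_trace (A : Matrix n n ℝ) : ∑ i, ∑ j, A i j ^ 2 = trace (Aᵀ * A) := by
  simp only [trace, diag_apply, mul_apply, transpose_apply, sq]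
  exact Finset.sum_comm

lemma col_dotProduct_col (Q : Matrix n n ℝ) (p q : n) :
    (fun r => Q r p) ⬝ᵥ (fun r => Q r q) = (Qᵀ * Q) p q := rfl

lemma transpose_mul_mul_apply (A C : Matrix n n ℝ) (i j : n) :
    (Aᵀ * C * A) i j = (fun r => A r i) ⬝ᵥ (C *ᵥ fun r => A r j) := by
  rw [Matrix.mul_assoc, mul_apply']
  rfl

variable [DecidableEq n] {Q : Matrix n n ℝ}

lemma mul_transpose_eq_one (hQ : Qᵀ * Q = 1) : Q * Qᵀ = 1 := mul_eq_one_comm.mp hQ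

lemma sum_sq_conj (hQ : Qᵀ * Q = 1) (A : Matrix n n ℝ) :
    ∑ i, ∑ j, (Qᵀ * A * Q) i j ^ 2 = ∑ i, ∑ j, A i j ^ 2 := by
  have hconj : (Qᵀ * A * Q)ᵀ * (Qᵀ * A * Q) = Qᵀ * (Aᵀ * A) * Q := by
    simp only [transpose_mul, transpose_transpose, Matrix.mul_assoc]
    rw [← Matrix.mul_assoc Q, mul_transpose_eq_one hQ, Matrix.one_mul]
  rw [sum_sq_eq_trace, sum_sq_eq_trace, hconj, trace_mul_cycle, mul_transpose_eq_one hQ,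
    Matrix.one_mul]

lemma dotProduct_mulVec_self (hQ : Qᵀ * Q = 1) (v : n → ℝ) :
    (Q *ᵥ v) ⬝ᵥ (Q *ᵥ v) = v ⬝ᵥ v := by
  rw [dotProduct_mulVec, vecMul_mulVec, ← mulVec_transpose, transpose_mul, transpose_transpose,
    hQ, one_mulVec]

lemma isCompact_orthogonal : IsCompact {Q : Matrix n n ℝ | Qᵀ * Q = 1} := by
  have hcube : IsCompact {Q : Matrix n n ℝ | ∀ i, Q i ∈ {v : n → ℝ | ∀ j, |v j| ≤ 1}} := by
    have h := isCompact_univ_pi fun _ : n => isCompact_cube (ι := n)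
    simp only [Set.pi, Set.mem_univ, true_implies] at h
    exact h
  refine hcube.of_isClosed_subset (isClosed_eq (by fun_prop) continuous_const)
    fun (Q : Matrix n n ℝ) hQ i => abs_apply_le_one_of_dotProduct_self ?_
  have h := congrFun (congrFun (mul_transpose_eq_one hQ) i) i
  rwa [mul_apply', one_apply_eq] at h

end Orthogonal

section Objective

variable {n : Type*} [Fintype n] [DecidableEq n] {L : Type*} [Fintype L]

def offDiagSq (A : Matrix n n ℝ) : ℝ := ∑ i, ∑ j, if i = j then 0 else A i j ^ 2

def jointOffDiag (A : L → Matrix n n ℝ) (V : Matrix n n ℝ) : ℝ := ∑ l, offDiagSq (Vᵀ * A l * V)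

def IsJointDiagMinimizer (A : L → Matrix n n ℝ) (W : Matrix n n ℝ) : Prop :=
  Wᵀ * W = 1 ∧ ∀ V : Matrix n n ℝ, Vᵀ * V = 1 → jointOffDiag A W ≤ jointOffDiag A V

lemma offDiagSq_eq (A : Matrix n n ℝ) :
    offDiagSq A = ∑ i, ∑ j, A i j ^ 2 - ∑ i, A i i ^ 2 := by
  simp only [offDiagSq, ← sum_sub_distrib]
  refine sum_congr rfl fun i _ => ?_
  rw [← Finset.sum_erase_add _ _ (mem_univ i), if_pos rfl, add_zero,
    ← Finset.sum_erase_add _ _ (mem_univ i), add_sub_cancel_right]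
  exact sum_congr rfl fun j hj => if_neg (Ne.symm (ne_of_mem_erase hj))

lemma offDiagSq_nonneg (A : Matrix n n ℝ) : 0 ≤ offDiagSq A :=
  sum_nonneg fun _ _ => sum_nonneg fun _ _ => by split_ifs <;> positivity

lemma apply_eq_zero_of_offDiagSq_eq_zero {A : Matrix n n ℝ} (hA : offDiagSq A = 0) {i j : n}
    (hij : i ≠ j) : A i j = 0 := by
  have hnonneg : ∀ a b : n, 0 ≤ if a = b then (0 : ℝ) else A a b ^ 2 := fun a b => by
    split_ifs <;> positivity
  have hrow := (sum_eq_zero_iff_of_nonneg fun a _ => sum_nonneg fun b _ => hnonneg a b).mp hA i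
    (mem_univ i)
  have hij' := (sum_eq_zero_iff_of_nonneg fun b _ => hnonneg i b).mp hrow j (mem_univ j)
  rw [if_neg hij] at hij'
  exact pow_eq_zero_iff two_ne_zero |>.mp hij'

lemma continuous_offDiagSq : Continuous (offDiagSq : Matrix n n ℝ → ℝ) := by
  unfold offDiagSq
  exact continuous_finsetSum _ fun i _ => continuous_finsetSum _ fun j _ => by
    split_ifs <;> fun_prop

lemma offDiagSq_conj_sub (A : Matrix n n ℝ) {Q : Matrix n n ℝ} (hQ : Qᵀ * Q = 1) :
    offDiagSq (Qᵀ * A * Q) - offDiagSq A = ∑ i, A i i ^ 2 - ∑ i, (Qᵀ * A * Q) i i ^ 2 := by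
  rw [offDiagSq_eq, offDiagSq_eq, sum_sq_conj hQ]
  ring

lemma IsJointDiagMinimizer.conj {A : L → Matrix n n ℝ} {W Q : Matrix n n ℝ}
    (hW : IsJointDiagMinimizer A W) (hQ : Qᵀ * Q = 1) :
    IsJointDiagMinimizer (fun l => Qᵀ * A l * Q) (Qᵀ * W) := by
  have hQ' := mul_transpose_eq_one hQ
  have hconj : ∀ V, jointOffDiag (fun l => Qᵀ * A l * Q) (Qᵀ * V) = jointOffDiag A V := by
    intro V
    simp only [jointOffDiag, transpose_mul, transpose_transpose, Matrix.mul_assoc]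
    simp only [← Matrix.mul_assoc Q Qᵀ, hQ', Matrix.one_mul]
  refine ⟨?_, fun V hV => ?_⟩
  · rw [transpose_mul, transpose_transpose, Matrix.mul_assoc, ← Matrix.mul_assoc Q, hQ',
      Matrix.one_mul, hW.1]
  · have hQV : (Q * V)ᵀ * (Q * V) = 1 := by
      rw [transpose_mul, Matrix.mul_assoc, ← Matrix.mul_assoc Qᵀ, hQ, Matrix.one_mul, hV]
    have h := hW.2 (Q * V) hQV
    rwa [← hconj, ← hconj (Q * V), ← Matrix.mul_assoc, hQ, Matrix.one_mul] at h

lemma IsJointDiagMinimizer.one_conj {A : L → Matrix n n ℝ} {W : Matrix n n ℝ}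
    (hW : IsJointDiagMinimizer A W) : IsJointDiagMinimizer (fun l => Wᵀ * A l * W) 1 := by
  simpa only [hW.1] using hW.conj hW.1

end Objective

section Givens

open Real

variable {n : Type*} [Fintype n] [DecidableEq n]

/-- The columns of the rotation by `θ` in the `(p, q)`-plane. -/
noncomputable def givensCol (p q : n) (θ : ℝ) (i : n) : n → ℝ :=
  if i = p then cos θ • Pi.single p 1 + sin θ • Pi.single q 1
  else if i = q then -sin θ • Pi.single p 1 + cos θ • Pi.single q 1
  else Pi.single i 1

noncomputable def givens (p q : n) (θ : ℝ) : Matrix n n ℝ := of fun r i => givensCol p q θ i r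

variable {p q : n}

lemma givens_transpose_mul_self (hpq : p ≠ q) (θ : ℝ) : (givens p q θ)ᵀ * givens p q θ = 1 := by
  ext i j
  rw [← col_dotProduct_col]
  change givensCol p q θ i ⬝ᵥ givensCol p q θ j = _
  have hqp := Ne.symm hpq
  unfold givensCol
  split_ifs <;> subst_vars <;>
    simp [dotProduct_add, Pi.single_apply, one_apply, *] <;>
    first | nlinarith [sin_sq_add_cos_sq θ] | simp_all [eq_comm]

variable (C : Matrix n n ℝ) (θ : ℝ)

lemma givens_conj_apply_left (hC : Cᵀ = C) :
    ((givens p q θ)ᵀ * C * givens p q θ) p p =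
      cos θ ^ 2 * C p p + 2 * cos θ * sin θ * C p q + sin θ ^ 2 * C q q := by
  have hqp : C q p = C p q := by rw [← transpose_apply C p q, hC]
  rw [transpose_mul_mul_apply]
  change givensCol p q θ p ⬝ᵥ (C *ᵥ givensCol p q θ p) = _
  simp [givensCol, mulVec_add, mulVec_smul, dotProduct_add, hqp]
  ring

lemma givens_conj_apply_right (hpq : p ≠ q) (hC : Cᵀ = C) :
    ((givens p q θ)ᵀ * C * givens p q θ) q q =
      sin θ ^ 2 * C p p - 2 * cos θ * sin θ * C p q + cos θ ^ 2 * C q q := by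
  have hqp : C q p = C p q := by rw [← transpose_apply C p q, hC]
  rw [transpose_mul_mul_apply]
  change givensCol p q θ q ⬝ᵥ (C *ᵥ givensCol p q θ q) = _
  simp [givensCol, mulVec_add, mulVec_smul, mulVec_neg, dotProduct_add, hqp, Ne.symm hpq]
  ring

lemma givens_conj_apply_of_ne {i : n} (hip : i ≠ p) (hiq : i ≠ q) :
    ((givens p q θ)ᵀ * C * givens p q θ) i i = C i i := by
  rw [transpose_mul_mul_apply]
  change givensCol p q θ i ⬝ᵥ (C *ᵥ givensCol p q θ i) = _
  simp [givensCol, hip, hiq]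

/-- The rotation preserves `C p p + C q q`, so only `C p p - C q q` matters. -/
lemma sum_diag_sq_sub_givens_conj (hpq : p ≠ q) (hC : Cᵀ = C) :
    ∑ i, C i i ^ 2 - ∑ i, ((givens p q θ)ᵀ * C * givens p q θ) i i ^ 2 =
      ((C p p - C q q) ^ 2 - (cos (2 * θ) * (C p p - C q q) + sin (2 * θ) * (2 * C p q)) ^ 2)
        / 2 := by
  rw [← sum_sub_distrib, Fintype.sum_eq_add p q hpq fun i hi => by
    rw [givens_conj_apply_of_ne C θ hi.1 hi.2, sub_self], givens_conj_apply_left C θ hC,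
    givens_conj_apply_right C θ hpq hC, cos_two_mul', sin_two_mul]
  linear_combination
    (-(C p p + C q q) ^ 2 * (1 + cos θ ^ 2 + sin θ ^ 2) / 2) * sin_sq_add_cos_sq θ

end Givens

section Stationarity

open Real

lemma sum_mul_eq_zero_of_forall_rotate_le {ι : Type*} [Fintype ι] (u v : ι → ℝ)
    (h : ∀ θ, ∑ i, (cos θ * u i + sin θ * v i) ^ 2 ≤ ∑ i, u i ^ 2) : ∑ i, u i * v i = 0 := by
  have hmax : IsLocalMax (fun θ => ∑ i, (cos θ * u i + sin θ * v i) ^ 2) 0 :=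
    Eventually.of_forall fun θ => by simpa using h θ
  have hderiv : HasDerivAt (fun θ => ∑ i, (cos θ * u i + sin θ * v i) ^ 2)
      (∑ i, 2 * (u i * v i)) 0 :=
    HasDerivAt.fun_sum fun i _ => (((hasDerivAt_cos 0).mul_const (u i)).fun_add
      ((hasDerivAt_sin 0).mul_const (v i))).fun_pow 2 |>.congr_deriv (by simp; ring)
  have h0 := hmax.hasDerivAt_eq_zero hderiv
  rw [← mul_sum] at h0
  linarith

variable {n : Type*} [Fintype n] [DecidableEq n] {L : Type*} [Fintype L]

lemma IsJointDiagMinimizer.sum_mul_sub_diag_eq_zero {C : L → Matrix n n ℝ}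
    (hmin : IsJointDiagMinimizer C 1) (hC : ∀ l, (C l)ᵀ = C l) {p q : n} (hpq : p ≠ q) :
    ∑ l, C l p q * (C l p p - C l q q) = 0 := by
  have hrot : ∀ θ, ∑ l, (cos θ * (C l p p - C l q q) + sin θ * (2 * C l p q)) ^ 2 ≤
      ∑ l, (C l p p - C l q q) ^ 2 := by
    intro θ
    have hG := givens_transpose_mul_self hpq (θ / 2)
    have hmin' := hmin.2 _ hG
    simp only [jointOffDiag, transpose_one, Matrix.one_mul, Matrix.mul_one] at hmin'
    have hgain : ∑ l, offDiagSq ((givens p q (θ / 2))ᵀ * C l * givens p q (θ / 2)) -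
        ∑ l, offDiagSq (C l) = ∑ l, ((C l p p - C l q q) ^ 2 -
          (cos θ * (C l p p - C l q q) + sin θ * (2 * C l p q)) ^ 2) / 2 := by
      rw [← sum_sub_distrib]
      refine sum_congr rfl fun l _ => ?_
      rw [offDiagSq_conj_sub _ hG, sum_diag_sq_sub_givens_conj _ _ hpq (hC l),
        mul_div_cancel₀ θ two_ne_zero]
    rw [← sum_div, sum_sub_distrib] at hgain
    linarith
  calc ∑ l, C l p q * (C l p p - C l q q)
      = (∑ l, (C l p p - C l q q) * (2 * C l p q)) / 2 := by
        rw [sum_div]; exact sum_congr rfl fun l _ => by ring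
    _ = 0 := by rw [sum_mul_eq_zero_of_forall_rotate_le _ _ hrot, zero_div]

end Stationarity

section SignedColDist

variable {n : Type*} [Fintype n]

noncomputable def signedColDist (A B : Matrix n n ℝ) (j : n) : ℝ :=
  ⨅ (i : n) (s : Bool), √(∑ r, ((if s then (1 : ℝ) else -1) * A r i - B r j) ^ 2)

lemma signedColDist_nonneg (A B : Matrix n n ℝ) (j : n) : 0 ≤ signedColDist A B j :=
  Real.iInf_nonneg fun _ => Real.iInf_nonneg fun _ => Real.sqrt_nonneg _

variable [DecidableEq n]

lemma signedColDist_mul {Q : Matrix n n ℝ} (hQ : Qᵀ * Q = 1) (A B : Matrix n n ℝ) (j : n) :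
    signedColDist (Q * A) (Q * B) j = signedColDist A B j := by
  have hsum : ∀ i (s : Bool),
      ∑ r, ((if s then (1 : ℝ) else -1) * (Q * A) r i - (Q * B) r j) ^ 2 =
        ∑ r, ((if s then (1 : ℝ) else -1) * A r i - B r j) ^ 2 := by
    intro i s
    set v : n → ℝ := fun k => (if s then (1 : ℝ) else -1) * A k i - B k j
    have hQv : ∀ r, (Q *ᵥ v) r = (if s then (1 : ℝ) else -1) * (Q * A) r i - (Q * B) r j := by
      intro r
      simp only [v, mulVec, dotProduct, mul_apply, mul_sub, sum_sub_distrib, mul_sum]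
      congr 1
      exact sum_congr rfl fun k _ => by ring
    calc _ = (Q *ᵥ v) ⬝ᵥ (Q *ᵥ v) := by simp only [dotProduct, hQv, sq]
      _ = v ⬝ᵥ v := dotProduct_mulVec_self hQ v
      _ = _ := by simp only [dotProduct, sq, v]
  simp only [signedColDist, hsum]

end SignedColDist

section JointEigenvectors

variable {n L : Type*} {lam Δ : n → L → ℝ} {P : Matrix n n ℝ}

lemma eq_of_mul_eq_mul_of_ne_zero (heig : ∀ l a p, lam a l * P a p = P a p * Δ p l) {a p : n}
    (hap : P a p ≠ 0) : lam a = Δ p :=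
  funext fun l => mul_right_cancel₀ hap ((heig l a p).trans (mul_comm _ _))

/-- On the support of column `p` the eigenvalue vector is `Δ p = lam a` with `a ≠ j`, where the
defining identity of `E a` applies. -/
lemma sum_coupling_eq [Fintype n] [Fintype L] {S : L → Matrix n n ℝ}
    (heig : ∀ l a p, lam a l * P a p = P a p * Δ p l) {j p : n} (hjp : P j p = 0)
    (hsimple : ∀ i, i ≠ j → ∑ l, (lam i l - lam j l) ^ 2 ≠ 0) {E : n → ℝ}
    (hE : ∀ i, i ≠ j → E i = (∑ l, (lam i l - lam j l) * S l j i) / ∑ l, (lam i l - lam j l) ^ 2) :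
    ∑ l, (∑ a, P a p * S l j a) * (Δ p l - lam j l) =
      (∑ l, (Δ p l - lam j l) ^ 2) * ∑ a, P a p * E a := by
  calc _ = ∑ a, P a p * ∑ l, S l j a * (Δ p l - lam j l) := by
        simp only [sum_mul, mul_sum]
        rw [sum_comm]
        exact sum_congr rfl fun _ _ => sum_congr rfl fun _ _ => by ring
    _ = ∑ a, (∑ l, (Δ p l - lam j l) ^ 2) * (P a p * E a) := sum_congr rfl fun a _ => by
        by_cases hap : P a p = 0
        · simp [hap]
        have hlam := eq_of_mul_eq_mul_of_ne_zero heig hap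
        have haj : a ≠ j := fun h => hap (h ▸ hjp)
        rw [hE a haj, ← hlam, mul_left_comm, mul_div_cancel₀ _ (hsimple a haj)]
        exact congrArg _ (sum_congr rfl fun l _ => mul_comm _ _)
    _ = _ := (mul_sum _ _ _).symm

end JointEigenvectors

section Perturbation

variable {n : Type*} [DecidableEq n] {L : Type*}

def perturbed (lam : n → L → ℝ) (S : L → Matrix n n ℝ) (ε : ℝ) (l : L) : Matrix n n ℝ :=
  diagonal (fun i => lam i l) + ε • S l

lemma perturbed_transpose {lam : n → L → ℝ} {S : L → Matrix n n ℝ} (hS : ∀ l, (S l)ᵀ = S l)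
    (ε : ℝ) (l : L) : (perturbed lam S ε l)ᵀ = perturbed lam S ε l := by
  simp [perturbed, hS]

lemma conj_eq_perturbed [Fintype n] {U : Matrix n n ℝ} (hU : Uᵀ * U = 1) (lam : n → L → ℝ)
    (R : L → Matrix n n ℝ) (ε : ℝ) (l : L) :
    Uᵀ * (U * diagonal (fun i => lam i l) * Uᵀ + ε • R l) * U =
      perturbed lam (fun l => Uᵀ * R l * U) ε l := by
  rw [perturbed, Matrix.mul_add, Matrix.add_mul, Matrix.mul_smul, Matrix.smul_mul]
  congr 2
  rw [← Matrix.mul_assoc, ← Matrix.mul_assoc, hU, Matrix.one_mul, Matrix.mul_assoc, hU,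
    Matrix.mul_one]

def colErr (W : Matrix n n ℝ) (σ : ℝ) (q j : n) : n → ℝ :=
  σ • (fun r => W r q) - Pi.single j 1

lemma colErr_eq_zero {P : Matrix n n ℝ} {σ : ℝ} {q j : n}
    (hq : ∀ r, P r q = σ * (Pi.single j 1 : n → ℝ) r) (hσ : σ * σ = 1) :
    colErr P σ q j = 0 := by
  ext r
  simp [colErr, hq, ← mul_assoc, hσ]

variable [Fintype n] [Fintype L] {lam : n → L → ℝ} {S : L → Matrix n n ℝ}

lemma IsJointDiagMinimizer.jointOffDiag_le {ε : ℝ} {W : Matrix n n ℝ}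
    (hW : IsJointDiagMinimizer (perturbed lam S ε) W) :
    jointOffDiag (perturbed lam S ε) W ≤ ε ^ 2 * ∑ l, ∑ i, ∑ j, S l i j ^ 2 := by
  refine (hW.2 1 (by simp)).trans ?_
  simp only [jointOffDiag, perturbed, transpose_one, Matrix.one_mul, Matrix.mul_one, mul_sum]
  refine sum_le_sum fun l _ => (sum_le_sum fun i _ => sum_le_sum fun j _ => ?_)
  split_ifs with hij
  · positivity
  · simp [diagonal_apply_ne _ hij, mul_pow]

lemma offDiagSq_diagonal_conj_eq_zero_of_tendsto {ι : Type*} {F : Filter ι} [F.NeBot]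
    {ε : ι → ℝ} {W : ι → Matrix n n ℝ} {P : Matrix n n ℝ} (hε : Tendsto ε F (𝓝 0))
    (hW : ∀ᶠ x in F, IsJointDiagMinimizer (perturbed lam S (ε x)) (W x))
    (hWP : Tendsto W F (𝓝 P)) (l : L) :
    offDiagSq (Pᵀ * diagonal (fun i => lam i l) * P) = 0 := by
  have hcont : Continuous fun x : ℝ × Matrix n n ℝ => jointOffDiag (perturbed lam S x.1) x.2 :=
    continuous_finsetSum _ fun _ _ => continuous_offDiagSq.comp (by unfold perturbed; fun_prop)
  have hlim : Tendsto (fun x => jointOffDiag (perturbed lam S (ε x)) (W x)) F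
      (𝓝 (jointOffDiag (perturbed lam S 0) P)) := by
    simpa only [Function.comp_def] using (hcont.tendsto ((0 : ℝ), P)).comp (hε.prodMk_nhds hWP)
  have hbound : Tendsto (fun x => ε x ^ 2 * ∑ l, ∑ i, ∑ j, S l i j ^ 2) F (𝓝 0) := by
    simpa using (hε.pow 2).mul_const (∑ l, ∑ i, ∑ j, S l i j ^ 2)
  have hle := le_of_tendsto_of_tendsto hlim hbound (hW.mono fun x hx => hx.jointOffDiag_le)
  simp only [jointOffDiag, perturbed, zero_smul, add_zero] at hle
  exact le_antisymm ((single_le_sum (f := fun l => offDiagSq (Pᵀ * diagonal (lam · l) * P))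
    (fun l _ => offDiagSq_nonneg _) (mem_univ l)).trans hle) (offDiagSq_nonneg _)

lemma mul_eq_mul_diagonal_of_offDiagSq_eq_zero {A P : Matrix n n ℝ} (hP : Pᵀ * P = 1)
    (hA : offDiagSq (Pᵀ * A * P) = 0) : A * P = P * diagonal fun p => (Pᵀ * A * P) p p := by
  have hdiag : Pᵀ * A * P = diagonal fun p => (Pᵀ * A * P) p p := by
    ext a b
    by_cases hab : a = b
    · subst hab; rw [diagonal_apply_eq]
    · rw [diagonal_apply_ne _ hab, apply_eq_zero_of_offDiagSq_eq_zero hA hab]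
  calc A * P = P * Pᵀ * A * P := by rw [mul_transpose_eq_one hP, Matrix.one_mul]
    _ = P * (Pᵀ * A * P) := by simp only [Matrix.mul_assoc]
    _ = _ := by rw [← hdiag]

lemma exists_tendsto_diagonalizing {ι : Type*} (𝒰 : Ultrafilter ι) {ε : ι → ℝ}
    (hε : Tendsto ε 𝒰 (𝓝 0)) {W : ι → Matrix n n ℝ}
    (hW : ∀ᶠ x in (𝒰 : Filter ι), IsJointDiagMinimizer (perturbed lam S (ε x)) (W x)) :
    ∃ P : Matrix n n ℝ, Pᵀ * P = 1 ∧ Tendsto W 𝒰 (𝓝 P) ∧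
      ∀ l a p, lam a l * P a p = P a p * (Pᵀ * diagonal (fun i => lam i l) * P) p p := by
  obtain ⟨P, hP, hWP⟩ :=
    isCompact_orthogonal.ultrafilter_le_nhds' (𝒰.map W) (hW.mono fun _ hx => hx.1)
  refine ⟨P, hP, hWP, fun l a p => ?_⟩
  simpa [diagonal_mul, mul_diagonal] using congrFun (congrFun
    (mul_eq_mul_diagonal_of_offDiagSq_eq_zero hP
      (offDiagSq_diagonal_conj_eq_zero_of_tendsto hε hW hWP l)) a) p

lemma exists_col_eq_sign_mul_single {P : Matrix n n ℝ} (hP : Pᵀ * P = 1) {Δ : n → L → ℝ}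
    (heig : ∀ l a p, lam a l * P a p = P a p * Δ p l) {j : n}
    (hsimple : ∀ i, i ≠ j → ∑ l, (lam i l - lam j l) ^ 2 ≠ 0) :
    ∃ q σ, (σ = 1 ∨ σ = -1) ∧ ∀ r, P r q = σ * (Pi.single j 1 : n → ℝ) r := by
  have hrow : P j ⬝ᵥ P j = 1 := by
    have h := congrFun (congrFun (mul_transpose_eq_one hP) j) j
    rwa [mul_apply', one_apply_eq] at h
  obtain ⟨q, hjq⟩ : ∃ q, P j q ≠ 0 := by
    by_contra! h
    simp [dotProduct, h] at hrow
  have hcol : ∀ r, r ≠ j → P r q = 0 := by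
    intro r hrj
    by_contra hrq
    apply hsimple r hrj
    simp [eq_of_mul_eq_mul_of_ne_zero heig hrq, eq_of_mul_eq_mul_of_ne_zero heig hjq]
  have hcolq : P j q * P j q = 1 := by
    have h := congrFun (congrFun hP q) q
    rwa [← col_dotProduct_col, one_apply_eq, dotProduct,
      Fintype.sum_eq_single j fun r hrj => by rw [hcol r hrj, zero_mul]] at h
  refine ⟨q, P j q, mul_self_eq_one_iff.mp hcolq, fun r => ?_⟩
  by_cases hrj : r = j
  · subst hrj; simp
  · simp [hcol r hrj, hrj]

lemma colErr_apply_self {W : Matrix n n ℝ} (hW : Wᵀ * W = 1) {σ : ℝ} (hσ : σ * σ = 1)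
    (q j : n) : colErr W σ q j j = -(colErr W σ q j ⬝ᵥ colErr W σ q j) / 2 := by
  have hcol := col_dotProduct_col W q q
  rw [hW, one_apply_eq] at hcol
  simp only [colErr, sub_dotProduct, dotProduct_sub, smul_dotProduct, dotProduct_smul,
    hcol, dotProduct_single, single_dotProduct, Pi.sub_apply, Pi.smul_apply, smul_eq_mul,
    Pi.single_eq_same]
  linear_combination hσ / 2

lemma apply_self_eq_zero_of_tendsto_rescaled_colErr {ι : Type*} {F : Filter ι} [F.NeBot]
    {W : ι → Matrix n n ℝ} {P : Matrix n n ℝ} (hWP : Tendsto W F (𝓝 P))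
    (hW : ∀ᶠ x in F, (W x)ᵀ * W x = 1) {σ : ℝ} (hσ : σ * σ = 1) {q j : n}
    (hq : ∀ r, P r q = σ * (Pi.single j 1 : n → ℝ) r) {z : n → ℝ}
    (hz : Tendsto (fun x => (√(colErr (W x) σ q j ⬝ᵥ colErr (W x) σ q j))⁻¹ •
      colErr (W x) σ q j) F (𝓝 z)) : z j = 0 := by
  have hnorm : Tendsto (fun x => √(colErr (W x) σ q j ⬝ᵥ colErr (W x) σ q j)) F (𝓝 0) := by
    have hc : Continuous fun V : Matrix n n ℝ => √(colErr V σ q j ⬝ᵥ colErr V σ q j) := by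
      unfold colErr; fun_prop
    have hP0 : √(colErr P σ q j ⬝ᵥ colErr P σ q j) = 0 := by simp [colErr_eq_zero hq hσ]
    simpa only [Function.comp_def, hP0] using (hc.tendsto P).comp hWP
  have heq : ∀ᶠ x in F, -√(colErr (W x) σ q j ⬝ᵥ colErr (W x) σ q j) / 2 =
      ((√(colErr (W x) σ q j ⬝ᵥ colErr (W x) σ q j))⁻¹ • colErr (W x) σ q j) j := by
    refine hW.mono fun x hx => ?_
    have hyj := colErr_apply_self hx hσ q j
    set y := colErr (W x) σ q j
    set h := √(y ⬝ᵥ y)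
    have hy : y ⬝ᵥ y = h * h := (Real.mul_self_sqrt (dotProduct_self_nonneg y)).symm
    rw [Pi.smul_apply, smul_eq_mul, hyj, hy]
    rcases eq_or_ne h 0 with h0 | h0
    · simp [h0]
    · field_simp
  simpa using tendsto_nhds_unique (((continuous_apply j).tendsto z).comp hz)
    ((hnorm.neg.div_const 2).congr' heq)

/-- The columns `p ≠ q` of `W` are orthogonal to `w_q = σ (e_j + colErr W σ q j)`, which lets
one replace `d r` by `d r - d j`, killing the `e_j` part. -/
lemma transpose_mul_diagonal_mul_apply {W : Matrix n n ℝ} (hW : Wᵀ * W = 1) {σ : ℝ}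
    (hσ : σ * σ = 1) (d : n → ℝ) {p q : n} (hpq : p ≠ q) (j : n) :
    (Wᵀ * diagonal d * W) p q = σ * ∑ r, W r p * (d r - d j) * colErr W σ q j r := by
  have horth : ∑ r, W r p * W r q = 0 := by
    rw [← dotProduct, col_dotProduct_col, hW, one_apply_ne hpq]
  have hterm : ∀ r, W r p * (d r - d j) * colErr W σ q j r =
      σ * (W r p * (d r * W r q) - d j * (W r p * W r q)) := by
    intro r
    by_cases hrj : r = j
    · subst hrj
      simp only [colErr, Pi.sub_apply, Pi.smul_apply, smul_eq_mul, Pi.single_eq_same]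
      ring
    · simp only [colErr, Pi.sub_apply, Pi.smul_apply, smul_eq_mul, Pi.single_eq_of_ne hrj]
      ring
  rw [transpose_mul_mul_apply, sum_congr rfl fun r _ => hterm r, ← mul_sum, ← mul_assoc, hσ,
    one_mul, sum_sub_distrib, ← mul_sum, horth, mul_zero, sub_zero]
  simp [dotProduct, mulVec_diagonal]

/-- The first-order condition divided by `h` (for `h = 0` it reads `0 = 0`, as `0⁻¹ = 0`). -/
lemma IsJointDiagMinimizer.rescaled_stationarity {ε : ℝ} {W : Matrix n n ℝ}
    (hW : IsJointDiagMinimizer (perturbed lam S ε) W) (hS : ∀ l, (S l)ᵀ = S l) {σ : ℝ}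
    (hσ : σ * σ = 1) {p q : n} (hpq : p ≠ q) (j : n) (h : ℝ) :
    ∑ l, (σ * ∑ r, W r p * (lam r l - lam j l) * (h⁻¹ • colErr W σ q j) r +
        ε / h * (Wᵀ * S l * W) p q) *
      ((Wᵀ * perturbed lam S ε l * W) p p - (Wᵀ * perturbed lam S ε l * W) q q) = 0 := by
  have hstat := hW.one_conj.sum_mul_sub_diag_eq_zero
    (fun l => by simp only [transpose_mul, transpose_transpose, perturbed_transpose hS,
      Matrix.mul_assoc]) hpq
  have hentry : ∀ l, (Wᵀ * perturbed lam S ε l * W) p q =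
      σ * ∑ r, W r p * (lam r l - lam j l) * colErr W σ q j r + ε * (Wᵀ * S l * W) p q := by
    intro l
    rw [perturbed, Matrix.mul_add, Matrix.add_mul, Matrix.add_apply,
      transpose_mul_diagonal_mul_apply hW.1 hσ _ hpq j, Matrix.mul_smul, Matrix.smul_mul,
      Matrix.smul_apply, smul_eq_mul]
  have hinner : ∀ l, ∑ r, W r p * (lam r l - lam j l) * (h⁻¹ • colErr W σ q j) r =
      h⁻¹ * ∑ r, W r p * (lam r l - lam j l) * colErr W σ q j r := by
    intro l
    rw [mul_sum]
    exact sum_congr rfl fun r _ => by rw [Pi.smul_apply, smul_eq_mul]; ring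
  calc _ = h⁻¹ * ∑ l, (Wᵀ * perturbed lam S ε l * W) p q *
        ((Wᵀ * perturbed lam S ε l * W) p p - (Wᵀ * perturbed lam S ε l * W) q q) := by
        rw [mul_sum]
        exact sum_congr rfl fun l _ => by rw [hinner, hentry]; ring
    _ = 0 := by rw [hstat, mul_zero]

lemma rescaled_stationarity_of_tendsto {ι : Type*} {F : Filter ι} [F.NeBot] {ε h : ι → ℝ}
    {W : ι → Matrix n n ℝ} {P : Matrix n n ℝ} {z : n → ℝ} {t σ : ℝ} {q j : n}
    (hε : Tendsto ε F (𝓝 0)) (hWP : Tendsto W F (𝓝 P))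
    (hz : Tendsto (fun x => (h x)⁻¹ • colErr (W x) σ q j) F (𝓝 z))
    (ht : Tendsto (fun x => ε x / h x) F (𝓝 t))
    (hW : ∀ᶠ x in F, IsJointDiagMinimizer (perturbed lam S (ε x)) (W x))
    (hS : ∀ l, (S l)ᵀ = S l) (hσ : σ * σ = 1) {p : n} (hpq : p ≠ q) :
    ∑ l, (σ * ∑ r, P r p * (lam r l - lam j l) * z r + t * (Pᵀ * S l * P) p q) *
      ((Pᵀ * diagonal (fun i => lam i l) * P) p p -
        (Pᵀ * diagonal (fun i => lam i l) * P) q q) = 0 := by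
  let Φ : ℝ × Matrix n n ℝ × (n → ℝ) × ℝ → ℝ := fun x =>
    ∑ l, (σ * ∑ r, x.2.1 r p * (lam r l - lam j l) * x.2.2.1 r +
        x.2.2.2 * (x.2.1ᵀ * S l * x.2.1) p q) *
      ((x.2.1ᵀ * perturbed lam S x.1 l * x.2.1) p p -
        (x.2.1ᵀ * perturbed lam S x.1 l * x.2.1) q q)
  have hΦ : Continuous Φ := by unfold Φ perturbed; fun_prop
  have hlim : Tendsto (fun x => Φ (ε x, W x, (h x)⁻¹ • colErr (W x) σ q j, ε x / h x)) F
      (𝓝 (Φ (0, P, z, t))) := by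
    simpa only [Function.comp_def] using
      (hΦ.tendsto _).comp (hε.prodMk_nhds (hWP.prodMk_nhds (hz.prodMk_nhds ht)))
  have hzero := tendsto_nhds_unique hlim (tendsto_const_nhds.congr' (hW.mono fun x hx =>
    (hx.rescaled_stationarity hS hσ hpq j (h x)).symm))
  simpa [Φ, perturbed] using hzero

lemma conj_apply_of_col_eq_sign_mul_single {P A : Matrix n n ℝ} (hA : Aᵀ = A) {σ : ℝ}
    {q j : n} (hq : ∀ r, P r q = σ * (Pi.single j 1 : n → ℝ) r) (p : n) :
    (Pᵀ * A * P) p q = σ * ∑ a, P a p * A j a := by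
  have hsym : ∀ a, A a j = A j a := fun a => by rw [← transpose_apply A j a, hA]
  have hcolq : (fun r => P r q) = σ • Pi.single j 1 := funext fun r => by simp [hq]
  rw [transpose_mul_mul_apply, hcolq, mulVec_smul, mulVec_single_one, dotProduct_smul,
    smul_eq_mul, dotProduct]
  simp [hsym]

lemma sum_mul_eq_neg_mul_sum_mul_of_stationary {P : Matrix n n ℝ} (hP : Pᵀ * P = 1)
    {Δ : n → L → ℝ} (heig : ∀ l a p, lam a l * P a p = P a p * Δ p l) {j q : n}
    (hsimple : ∀ i, i ≠ j → ∑ l, (lam i l - lam j l) ^ 2 ≠ 0) {σ : ℝ} (hσ : σ * σ = 1)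
    (hq : ∀ r, P r q = σ * (Pi.single j 1 : n → ℝ) r) (hS : ∀ l, (S l)ᵀ = S l) {E : n → ℝ}
    (hE : ∀ i, i ≠ j → E i = (∑ l, (lam i l - lam j l) * S l j i) / ∑ l, (lam i l - lam j l) ^ 2)
    {z : n → ℝ} {t : ℝ} {p : n} (hpq : p ≠ q)
    (hstat : ∑ l, (σ * ∑ r, P r p * (lam r l - lam j l) * z r + t * (Pᵀ * S l * P) p q) *
      (Δ p l - Δ q l) = 0) :
    ∑ a, P a p * z a = -t * ∑ a, P a p * E a := by
  have hσ0 : σ ≠ 0 := by rintro rfl; simp at hσ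
  have hΔq : Δ q = lam j :=
    (eq_of_mul_eq_mul_of_ne_zero heig (by simpa [hq] using hσ0 : P j q ≠ 0)).symm
  have hjp : P j p = 0 := by
    have h := col_dotProduct_col P p q
    rw [hP, one_apply_ne hpq, dotProduct, Fintype.sum_eq_single j fun r hrj => by
      rw [hq r, Pi.single_eq_of_ne hrj, mul_zero, mul_zero], hq j, Pi.single_eq_same] at h
    simpa [hσ0] using h
  have hγ : ∑ l, (Δ p l - lam j l) ^ 2 ≠ 0 := by
    obtain ⟨a, hap⟩ : ∃ a, P a p ≠ 0 := by
      by_contra! h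
      have h1 := col_dotProduct_col P p p
      simp [hP, dotProduct, h] at h1
    rw [← eq_of_mul_eq_mul_of_ne_zero heig hap]
    exact hsimple a fun h => hap (h ▸ hjp)
  have hlin : ∀ l, ∑ r, P r p * (lam r l - lam j l) * z r =
      (Δ p l - lam j l) * ∑ a, P a p * z a := fun l => by
    rw [mul_sum]
    exact sum_congr rfl fun r _ => by linear_combination z r * heig l r p
  have hsum : σ * (∑ l, (Δ p l - lam j l) ^ 2) *
      (∑ a, P a p * z a + t * ∑ a, P a p * E a) = 0 := by
    rw [← hstat, hΔq]
    calc _ = σ * (∑ a, P a p * z a) * ∑ l, (Δ p l - lam j l) ^ 2 +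
          σ * t * ((∑ l, (Δ p l - lam j l) ^ 2) * ∑ a, P a p * E a) := by ring
      _ = ∑ l, (σ * (∑ a, P a p * z a) * (Δ p l - lam j l) ^ 2 +
          σ * t * ((∑ a, P a p * S l j a) * (Δ p l - lam j l))) := by
        rw [sum_add_distrib, ← mul_sum, ← mul_sum, sum_coupling_eq heig hjp hsimple hE]
      _ = _ := sum_congr rfl fun l _ => by
        rw [hlin, conj_apply_of_col_eq_sign_mul_single (hS l) hq]
        ring
  linear_combination (mul_eq_zero.mp hsum).resolve_left (mul_ne_zero hσ0 hγ)

lemma dotProduct_self_le_of_coords {P : Matrix n n ℝ} (hP : Pᵀ * P = 1) {σ : ℝ} {q j : n}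
    (hq : ∀ r, P r q = σ * (Pi.single j 1 : n → ℝ) r) {z E : n → ℝ} {t : ℝ} (hzj : z j = 0)
    (hcoord : ∀ p, p ≠ q → ∑ a, P a p * z a = -t * ∑ a, P a p * E a) :
    z ⬝ᵥ z ≤ t ^ 2 * (E ⬝ᵥ E) := by
  have hPt : Pᵀᵀ * Pᵀ = 1 := by rw [transpose_transpose]; exact mul_transpose_eq_one hP
  have happly : ∀ (v : n → ℝ) p, (Pᵀ *ᵥ v) p = ∑ a, P a p * v a := fun _ _ => rfl
  rw [← dotProduct_mulVec_self hPt z, ← dotProduct_mulVec_self hPt E, dotProduct, dotProduct,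
    mul_sum]
  refine sum_le_sum fun p _ => ?_
  by_cases hpq : p = q
  · have hzq : (Pᵀ *ᵥ z) p = 0 := by simp [happly, hpq, hq, Pi.single_apply, hzj]
    rw [hzq, mul_zero]
    exact mul_nonneg (sq_nonneg t) (mul_self_nonneg _)
  · rw [happly, happly, hcoord p hpq]
    exact le_of_eq (by ring)

lemma signedColDist_le_sqrt_colErr (W : Matrix n n ℝ) {σ : ℝ} (hσ : σ = 1 ∨ σ = -1) (q j : n) :
    signedColDist W 1 j ≤ √(colErr W σ q j ⬝ᵥ colErr W σ q j) := by
  obtain ⟨s, rfl⟩ : ∃ s : Bool, (if s then (1 : ℝ) else -1) = σ := by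
    rcases hσ with rfl | rfl
    exacts [⟨true, rfl⟩, ⟨false, rfl⟩]
  refine (ciInf_le ⟨0, ?_⟩ q).trans ((ciInf_le ⟨0, ?_⟩ s).trans (le_of_eq ?_))
  · rintro _ ⟨i, rfl⟩
    exact Real.iInf_nonneg fun _ => Real.sqrt_nonneg _
  · rintro _ ⟨s, rfl⟩
    exact Real.sqrt_nonneg _
  · cases s <;> simp [colErr, dotProduct, one_apply, Pi.single_apply, sq]

variable {j : n} {E : n → ℝ} {W : ℝ → Matrix n n ℝ}

theorem eventually_signedColDist_le_of_ultrafilter (hS : ∀ l, (S l)ᵀ = S l)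
    (hsimple : ∀ i, i ≠ j → ∑ l, (lam i l - lam j l) ^ 2 ≠ 0)
    (hE : ∀ i, i ≠ j → E i = (∑ l, (lam i l - lam j l) * S l j i) / ∑ l, (lam i l - lam j l) ^ 2)
    (hW : ∀ ε, 0 < ε → IsJointDiagMinimizer (perturbed lam S ε) (W ε)) {δ : ℝ} (hδ : 0 < δ)
    (𝒰 : Ultrafilter ℝ) (h𝒰 : (𝒰 : Filter ℝ) ≤ 𝓝[>] 0) :
    ∀ᶠ ε in (𝒰 : Filter ℝ), signedColDist (W ε) 1 j ≤ (√(E ⬝ᵥ E) + δ) * ε := by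
  by_contra hnot
  have hpos : ∀ᶠ ε in (𝒰 : Filter ℝ), 0 < ε := h𝒰 self_mem_nhdsWithin
  have hmin := hpos.mono hW
  have hε : Tendsto (fun ε : ℝ => ε) 𝒰 (𝓝 0) := h𝒰.trans nhdsWithin_le_nhds
  obtain ⟨P, hP, hWP, heig⟩ := exists_tendsto_diagonalizing 𝒰 hε hmin
  obtain ⟨q, σ, hσ, hq⟩ := exists_col_eq_sign_mul_single hP heig hsimple
  have hσσ : σ * σ = 1 := by rcases hσ with rfl | rfl <;> norm_num
  set c := √(E ⬝ᵥ E)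
  set h := fun ε => √(colErr (W ε) σ q j ⬝ᵥ colErr (W ε) σ q j)
  have hcδ : 0 < c + δ := by positivity
  have hfar : ∀ᶠ ε in (𝒰 : Filter ℝ), 0 < ε ∧ (c + δ) * ε < h ε :=
    (hpos.and (Ultrafilter.eventually_not.mpr hnot)).mono fun ε hε =>
      ⟨hε.1, (not_le.mp hε.2).trans_le (signedColDist_le_sqrt_colErr _ hσ q j)⟩
  obtain ⟨z, hz1, hz⟩ := isCompact_unitSphere.ultrafilter_le_nhds'
    (𝒰.map fun ε => (h ε)⁻¹ • colErr (W ε) σ q j) (hfar.mono fun ε hε => by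
      refine dotProduct_self_inv_sqrt_smul fun h0 => ?_
      have : h ε = 0 := by simp [h, h0]
      nlinarith [hε.1, hε.2])
  obtain ⟨t, ⟨ht0, ht1⟩, ht⟩ := (isCompact_Icc (a := 0) (b := 1 / (c + δ))).ultrafilter_le_nhds'
    (𝒰.map fun ε => ε / h ε) (hfar.mono fun ε hε => by
      have hh : 0 < h ε := (mul_pos hcδ hε.1).trans hε.2
      refine ⟨div_nonneg hε.1.le hh.le, ?_⟩
      rw [div_le_div_iff₀ hh hcδ]
      linarith [hε.2])
  have hbound := dotProduct_self_le_of_coords hP hq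
    (apply_self_eq_zero_of_tendsto_rescaled_colErr hWP (hmin.mono fun _ hx => hx.1) hσσ hq hz)
    fun p hpq => sum_mul_eq_neg_mul_sum_mul_of_stationary hP heig hsimple hσσ hq hS hE hpq
      (rescaled_stationarity_of_tendsto hε hWP hz ht hmin hS hσσ hpq)
  rw [show z ⬝ᵥ z = 1 from hz1, ← Real.sq_sqrt (dotProduct_self_nonneg E)] at hbound
  have htc : 1 ≤ t * c := by nlinarith [mul_nonneg ht0 (Real.sqrt_nonneg (E ⬝ᵥ E))]
  have htpos : 0 < t := ht0.lt_of_ne fun h0 => by rw [← h0, zero_mul] at htc; linarith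
  nlinarith [(le_div_iff₀ hcδ).mp ht1, mul_pos htpos hδ]

theorem limsup_signedColDist_le (hS : ∀ l, (S l)ᵀ = S l)
    (hsimple : ∀ i, i ≠ j → ∑ l, (lam i l - lam j l) ^ 2 ≠ 0)
    (hE : ∀ i, i ≠ j → E i = (∑ l, (lam i l - lam j l) * S l j i) / ∑ l, (lam i l - lam j l) ^ 2)
    (hW : ∀ ε, 0 < ε → IsJointDiagMinimizer (perturbed lam S ε) (W ε)) :
    limsup (fun ε => (1 / ε) * signedColDist (W ε) 1 j) (𝓝[>] 0) ≤ √(E ⬝ᵥ E) := by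
  refine le_of_forall_pos_le_add fun δ hδ => limsup_le_of_le
    (isCoboundedUnder_le_of_eventually_le _ (eventually_nhdsWithin_of_forall fun ε hε =>
      mul_nonneg (one_div_nonneg.mpr (le_of_lt hε)) (signedColDist_nonneg _ _ _))) ?_
  have hle : 𝓝[>] (0 : ℝ) ≤ 𝓟 {ε | signedColDist (W ε) 1 j ≤ (√(E ⬝ᵥ E) + δ) * ε} :=
    le_iff_ultrafilter.2 fun 𝒰 h𝒰 => le_principal_iff.2
      (eventually_signedColDist_le_of_ultrafilter hS hsimple hE hW hδ 𝒰 h𝒰)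
  filter_upwards [le_principal_iff.1 hle, self_mem_nhdsWithin] with ε hε hε0
  rw [one_div, inv_mul_le_iff₀ hε0]
  linarith

end Perturbation

end JointDiagonalization

open JointDiagonalization

theorem stmt_0_general {d k L : ℕ}
    (Ubar : Matrix (Fin d) (Fin d) ℝ) (hUbar : Ubarᵀ * Ubar = 1)
    (lam : Fin d → Fin L → ℝ)
    (R : Fin L → Matrix (Fin d) (Fin d) ℝ)
    (hRsymm : ∀ l, (R l)ᵀ = R l)
    (M : ℝ → Fin L → Matrix (Fin d) (Fin d) ℝ)
    (hM : ∀ (ε : ℝ) (l : Fin L),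
      M ε l = Ubar * Matrix.diagonal (fun i => lam i l) * Ubarᵀ + ε • R l)
    (hdenom : ∀ i j : Fin d, i ≠ j → (j : ℕ) < k →
      (∑ l, (lam i l - lam j l) ^ 2) ≠ 0)
    (E : Fin d → Fin d → ℝ)
    (hE : ∀ i j : Fin d, i ≠ j → (j : ℕ) < k →
      E i j = (∑ l, (lam i l - lam j l) * (∑ a, ∑ b, Ubar a j * R l a b * Ubar b i)) /
        (∑ l, (lam i l - lam j l) ^ 2))
    (Ut : ℝ → Matrix (Fin d) (Fin d) ℝ)
    (hUt : ∀ ε : ℝ, 0 < ε →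
      (Ut ε)ᵀ * Ut ε = 1 ∧
      ∀ V : Matrix (Fin d) (Fin d) ℝ, Vᵀ * V = 1 →
        (∑ l, ∑ i, ∑ j, if i = j then 0 else (((Ut ε)ᵀ * M ε l * Ut ε) i j) ^ 2) ≤
        (∑ l, ∑ i, ∑ j, if i = j then 0 else ((Vᵀ * M ε l * V) i j) ^ 2)) :
    ∀ j : Fin d, (j : ℕ) < k →
      Filter.limsup
        (fun ε : ℝ => (1 / ε) *
          ⨅ (i : Fin d) (s : Bool),
            Real.sqrt (∑ r, ((if s then (1 : ℝ) else -1) * Ut ε r i - Ubar r j) ^ 2))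
        (nhdsWithin 0 (Set.Ioi 0))
      ≤ Real.sqrt (∑ i, E i j ^ 2) := by
  intro j hj
  set S : Fin L → Matrix (Fin d) (Fin d) ℝ := fun l => Ubarᵀ * R l * Ubar
  have hS : ∀ l, (S l)ᵀ = S l := fun l => by
    simp only [S, transpose_mul, transpose_transpose, hRsymm, Matrix.mul_assoc]
  have hSentry : ∀ l i, S l j i = ∑ a, ∑ b, Ubar a j * R l a b * Ubar b i := fun l i => by
    simp only [S, mul_apply, transpose_apply, sum_mul]
    exact sum_comm
  have hW : ∀ ε, 0 < ε → IsJointDiagMinimizer (perturbed lam S ε) (Ubarᵀ * Ut ε) := by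
    intro ε hε
    simpa only [hM, conj_eq_perturbed hUbar] using IsJointDiagMinimizer.conj (hUt ε hε) hUbar
  have hdist : ∀ ε, signedColDist (Ut ε) Ubar j = signedColDist (Ubarᵀ * Ut ε) 1 j := fun ε => by
    rw [← signedColDist_mul hUbar (Ubarᵀ * Ut ε) 1 j, ← Matrix.mul_assoc,
      mul_transpose_eq_one hUbar, Matrix.one_mul, Matrix.mul_one]
  have hEE : (fun i => E i j) ⬝ᵥ (fun i => E i j) = ∑ i, E i j ^ 2 := by
    simp only [dotProduct, sq]
  change limsup (fun ε => (1 / ε) * signedColDist (Ut ε) Ubar j) (𝓝[>] 0) ≤ _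
  simpa only [hdist, hEE] using limsup_signedColDist_le (E := fun i => E i j) hS
    (fun i hi => hdenom i j hi hj) (fun i hi => by simp only [hE i j hi hj, hSentry]) hW

/-- first-order perturbation bound (Cardoso) for the global minimizer
of the orthogonal joint diagonalization objective, in the low-rank setting.
`Ubar` is the orthogonal extension `Ū ∈ O(d)` of `U ∈ ℝ^{d×k}` (its first `k`
columns are `u_1, …, u_k`), and `lam i l = λ_{il}` with `λ_{il} = 0` for `i > k`,
so that `M_l(ε) = U Λ_l Uᵀ + ε R_l = Ū Λ̄_l Ūᵀ + ε R_l`. -/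
theorem stmt_0 {d k L : ℕ} (hL : 1 ≤ L) (hk : k ≤ d)
    (Ubar : Matrix (Fin d) (Fin d) ℝ) (hUbar : Ubarᵀ * Ubar = 1)
    (lam : Fin d → Fin L → ℝ)
    (hlam : ∀ (i : Fin d) (l : Fin L), k ≤ (i : ℕ) → lam i l = 0)
    (R : Fin L → Matrix (Fin d) (Fin d) ℝ)
    (hRsymm : ∀ l, (R l)ᵀ = R l)
    (hRnorm : ∀ l, Real.sqrt (∑ i, ∑ j, (R l i j) ^ 2) ≤ 1)
    (M : ℝ → Fin L → Matrix (Fin d) (Fin d) ℝ)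
    (hM : ∀ (ε : ℝ) (l : Fin L),
      M ε l = Ubar * Matrix.diagonal (fun i => lam i l) * Ubarᵀ + ε • R l)
    (hdenom : ∀ i j : Fin d, i ≠ j → (j : ℕ) < k →
      (∑ l, (lam i l - lam j l) ^ 2) ≠ 0)
    (E : Fin d → Fin d → ℝ)
    (hE : ∀ i j : Fin d, i ≠ j → (j : ℕ) < k →
      E i j = (∑ l, (lam i l - lam j l) * (∑ a, ∑ b, Ubar a j * R l a b * Ubar b i)) /
        (∑ l, (lam i l - lam j l) ^ 2))
    (hEdiag : ∀ j : Fin d, E j j = 0)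
    (Ut : ℝ → Matrix (Fin d) (Fin d) ℝ)
    (hUt : ∀ ε : ℝ, 0 < ε →
      (Ut ε)ᵀ * Ut ε = 1 ∧
      ∀ V : Matrix (Fin d) (Fin d) ℝ, Vᵀ * V = 1 →
        (∑ l, ∑ i, ∑ j, if i = j then 0 else (((Ut ε)ᵀ * M ε l * Ut ε) i j) ^ 2) ≤
        (∑ l, ∑ i, ∑ j, if i = j then 0 else ((Vᵀ * M ε l * V) i j) ^ 2)) :
    ∀ j : Fin d, (j : ℕ) < k →
      Filter.limsup
        (fun ε : ℝ => (1 / ε) *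
          ⨅ (i : Fin d) (s : Bool),
            Real.sqrt (∑ r, ((if s then (1 : ℝ) else -1) * Ut ε r i - Ubar r j) ^ 2))
        (nhdsWithin 0 (Set.Ioi 0))
      ≤ Real.sqrt (∑ i, E i j ^ 2) :=
  stmt_0_general Ubar hUbar lam R hRsymm M hM hdenom E hE Ut hUt
end

section
/- Let M_1,…,M_L ∈ ℝ^{d×d} and define F(V) = Σ_{l=1}^L Σ_{i≠j} (Vᵀ M_l V)_{ij}² for V ∈ O(d). For V ∈ O(d) define the matrix S(V) = Σ_{l=1}^L Σ_{i≠j} (e_iᵀ Vᵀ M_l V e_j) · (e_i e_jᵀ Vᵀ M_lᵀ V − Vᵀ M_lᵀ V e_i e_jᵀ), where e_1,…,e_d are the standard basis vectors. If V ∈ O(d) is a local minimizer of F restricted to the orthogonal group O(d), then S(V) = S(V)ᵀ. -/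
/-!
Write `N_l = Vᵀ M_l V` and `off(N)` for the off-diagonal part of `N`. Expanding
`e_i e_jᵀ = single i j 1` gives `S(V) = Σ_l (off(N_l) N_lᵀ - N_lᵀ off(N_l))`. Along the curve
`t ↦ V exp(tE)` with `E` skew, which stays in `O(d)`, the matrices `N_l` move with velocity
`Eᵀ N_l + N_l E`, so the derivative of `F` at `t = 0` is
`2 Σ_l tr(off(N_l)ᵀ (Eᵀ N_l + N_l E)) = -2 tr(S(V)ᵀ E)`. At a local minimizer it vanishes for every
skew `E`, and a matrix whose trace pairing with every skew matrix vanishes is symmetric.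
-/

open Matrix

namespace Matrix

variable {n R : Type*} [Fintype n] [DecidableEq n]

def offDiag [Zero R] (A : Matrix n n R) : Matrix n n R :=
  of fun i j => if i = j then 0 else A i j

def offDiagSq (A : Matrix n n ℝ) : ℝ :=
  ∑ i, ∑ j, if i = j then 0 else A i j ^ 2

theorem sum_ite_smul_single_mul_sub_mul_single [CommRing R] (A C : Matrix n n R) :
    (∑ i, ∑ j, if i = j then (0 : Matrix n n R) else
        A i j • (single i j (1 : R) * C - C * single i j (1 : R))) =
      offDiag A * C - C * offDiag A := by
  have hA : offDiag A = ∑ i, ∑ j, if i = j then 0 else A i j • single i j (1 : R) := by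
    conv_lhs => rw [matrix_eq_sum_single (offDiag A)]
    refine Finset.sum_congr rfl fun i _ => Finset.sum_congr rfl fun j _ => ?_
    split_ifs with h <;> simp [offDiag, h]
  simp only [hA, Finset.sum_mul, Finset.mul_sum, ← Finset.sum_sub_distrib]
  refine Finset.sum_congr rfl fun i _ => Finset.sum_congr rfl fun j _ => ?_
  split_ifs
  · simp
  · rw [smul_sub, smul_mul_assoc, mul_smul_comm]

theorem transpose_eq_of_forall_trace_mul_skew_eq_zero [Ring R] {X : Matrix n n R}
    (h : ∀ E : Matrix n n R, Eᵀ = -E → trace (X * E) = 0) : Xᵀ = X := by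
  ext a b
  have hskew : (single b a (1 : R) - single a b 1)ᵀ = -(single b a 1 - single a b 1) := by
    simp [transpose_sub]
  have := h _ hskew
  rw [mul_sub, trace_sub, trace_mul_single, trace_mul_single] at this
  simpa [sub_eq_zero, eq_comm] using this

theorem trace_transpose_mul_transpose_mul_add_of_skew [CommRing R] (O N E : Matrix n n R)
    (hE : Eᵀ = -E) :
    trace (Oᵀ * (Eᵀ * N + N * E)) = -trace ((O * Nᵀ - Nᵀ * O)ᵀ * E) := by
  rw [hE, transpose_sub, transpose_mul, transpose_mul, transpose_transpose]
  simp only [mul_add, sub_mul, trace_add, trace_sub, Matrix.mul_neg, Matrix.neg_mul, trace_neg,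
    ← Matrix.mul_assoc]
  rw [trace_mul_cycle Oᵀ E N]
  ring

theorem transpose_exp_smul_mul_exp_smul {E : Matrix n n ℝ} (hE : Eᵀ = -E) (t : ℝ) :
    (NormedSpace.exp (t • E))ᵀ * NormedSpace.exp (t • E) = 1 := by
  rw [← Matrix.exp_transpose, transpose_smul, hE, ← Matrix.exp_add_of_commute _ _
    ((Commute.refl E).neg_left.smul_left t |>.smul_right t)]
  simp

section Calculus

-- A Banach-algebra norm is needed for the calculus of `exp`; the statements only involve the
-- standard topology on matrices, which this norm induces.
open scoped Matrix.Norms.Operator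

theorem hasDerivAt_exp_smul_zero (A : Matrix n n ℝ) :
    HasDerivAt (fun t : ℝ => NormedSpace.exp (t • A)) A 0 := by
  have h := hasDerivAt_exp_smul_const (𝕂 := ℝ) A 0
  rw [zero_smul, NormedSpace.exp_zero, one_mul] at h
  exact h

theorem hasDerivAt_transpose_exp_smul_mul_mul_exp_smul (N E : Matrix n n ℝ) :
    HasDerivAt (fun t : ℝ => (NormedSpace.exp (t • E))ᵀ * N * NormedSpace.exp (t • E))
      (Eᵀ * N + N * E) 0 := by
  have h := ((hasDerivAt_exp_smul_zero Eᵀ).mul_const N).fun_mul (hasDerivAt_exp_smul_zero E)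
  simp only [← transpose_smul, Matrix.exp_transpose, zero_smul, NormedSpace.exp_zero,
    one_mul, mul_one] at h
  exact h

theorem hasDerivAt_mul_exp_smul (V E : Matrix n n ℝ) :
    HasDerivAt (fun t : ℝ => V * NormedSpace.exp (t • E)) (V * E) 0 :=
  (hasDerivAt_exp_smul_zero E).const_mul V

omit [DecidableEq n] in
theorem _root_.HasDerivAt.matrix_apply {m p : Type*} [Fintype m] [Fintype p]
    {A : ℝ → Matrix m p ℝ} {A' : Matrix m p ℝ} {t : ℝ}
    (h : HasDerivAt A A' t) (i : m) (j : p) : HasDerivAt (fun s => A s i j) (A' i j) t :=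
  (LinearMap.toContinuousLinearMap (entryLinearMap ℝ ℝ i j)).hasFDerivAt.comp_hasDerivAt t h

end Calculus

theorem _root_.HasDerivAt.offDiagSq {A : ℝ → Matrix n n ℝ} {A' : Matrix n n ℝ} {t : ℝ}
    (h : HasDerivAt A A' t) :
    HasDerivAt (fun s => offDiagSq (A s)) (2 * trace ((offDiag (A t))ᵀ * A')) t := by
  have hentry : ∀ i j, HasDerivAt (fun s => if i = j then 0 else A s i j ^ 2)
      (if i = j then 0 else 2 * A t i j * A' i j) t := by
    intro i j
    split_ifs
    · exact hasDerivAt_const t 0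
    · simpa using (h.matrix_apply i j).fun_pow 2
  have hval : 2 * trace ((offDiag (A t))ᵀ * A') =
      ∑ i, ∑ j, if i = j then 0 else 2 * A t i j * A' i j := by
    simp only [trace, diag_apply, mul_apply, transpose_apply, Finset.mul_sum]
    rw [Finset.sum_comm]
    refine Finset.sum_congr rfl fun i _ => Finset.sum_congr rfl fun j _ => ?_
    split_ifs with hij <;> simp [offDiag, hij]
    ring
  rw [hval]
  exact HasDerivAt.fun_sum fun i _ => HasDerivAt.fun_sum fun j _ => hentry i j

theorem hasDerivAt_offDiagSq_transpose_exp_smul_mul_mul_exp_smul (N E : Matrix n n ℝ) :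
    HasDerivAt (fun t : ℝ => offDiagSq ((NormedSpace.exp (t • E))ᵀ * N * NormedSpace.exp (t • E)))
      (2 * trace ((offDiag N)ᵀ * (Eᵀ * N + N * E))) 0 := by
  have h := (hasDerivAt_transpose_exp_smul_mul_mul_exp_smul N E).offDiagSq
  rwa [zero_smul, NormedSpace.exp_zero, transpose_one, Matrix.one_mul, Matrix.mul_one] at h

theorem isLocalMin_mul_exp_smul {f : Matrix n n ℝ → ℝ} {V E : Matrix n n ℝ} {η : ℝ}
    (hV : Vᵀ * V = 1) (hE : Eᵀ = -E) (hη : 0 < η)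
    (hmin : ∀ W : Matrix n n ℝ, Wᵀ * W = 1 → √(∑ a, ∑ b, (W a b - V a b) ^ 2) < η → f V ≤ f W) :
    IsLocalMin (fun t : ℝ => f (V * NormedSpace.exp (t • E))) 0 := by
  have hdist : ContinuousAt
      (fun t : ℝ => √(∑ a, ∑ b, ((V * NormedSpace.exp (t • E)) a b - V a b) ^ 2)) 0 := by
    refine Real.continuous_sqrt.continuousAt.comp ?_
    have hentry a b := ((hasDerivAt_mul_exp_smul V E).matrix_apply a b).continuousAt
    fun_prop
  have hnear := hdist.eventually_lt continuousAt_const (by simpa using hη)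
  filter_upwards [hnear] with t ht
  have horth : (V * NormedSpace.exp (t • E))ᵀ * (V * NormedSpace.exp (t • E)) = 1 := by
    rw [transpose_mul, Matrix.mul_assoc, ← Matrix.mul_assoc Vᵀ, hV, Matrix.one_mul,
      transpose_exp_smul_mul_exp_smul hE]
  simpa using hmin _ horth ht

end Matrix

/-- Cardoso's first-order optimality criterion: at a local minimizer
`V` of the joint diagonalization objective on `O(d)`, the matrix `S(V)` is
symmetric. -/
theorem stmt_6 {d L : ℕ} (M : Fin L → Matrix (Fin d) (Fin d) ℝ)
    (V : Matrix (Fin d) (Fin d) ℝ) (hV : Vᵀ * V = 1)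
    (hmin : ∃ η > (0 : ℝ), ∀ W : Matrix (Fin d) (Fin d) ℝ, Wᵀ * W = 1 →
      Real.sqrt (∑ a, ∑ b, (W a b - V a b) ^ 2) < η →
        (∑ l, ∑ i, ∑ j, if i = j then 0 else ((Vᵀ * M l * V) i j) ^ 2) ≤
        (∑ l, ∑ i, ∑ j, if i = j then 0 else ((Wᵀ * M l * W) i j) ^ 2)) :
    (∑ l, ∑ i, ∑ j, if i = j then (0 : Matrix (Fin d) (Fin d) ℝ) else
        ((Vᵀ * M l * V) i j) •
          (Matrix.single i j (1 : ℝ) * (Vᵀ * (M l)ᵀ * V) -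
            (Vᵀ * (M l)ᵀ * V) * Matrix.single i j (1 : ℝ))) =
    (∑ l, ∑ i, ∑ j, if i = j then (0 : Matrix (Fin d) (Fin d) ℝ) else
        ((Vᵀ * M l * V) i j) •
          (Matrix.single i j (1 : ℝ) * (Vᵀ * (M l)ᵀ * V) -
            (Vᵀ * (M l)ᵀ * V) * Matrix.single i j (1 : ℝ)))ᵀ := by
  obtain ⟨η, hη, hmin⟩ := hmin
  have hMt : ∀ l, Vᵀ * (M l)ᵀ * V = (Vᵀ * M l * V)ᵀ := fun l => by
    simp [transpose_mul, Matrix.mul_assoc]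
  simp only [hMt, sum_ite_smul_single_mul_sub_mul_single]
  set S := ∑ l, (offDiag (Vᵀ * M l * V) * (Vᵀ * M l * V)ᵀ -
    (Vᵀ * M l * V)ᵀ * offDiag (Vᵀ * M l * V))
  suffices h : ∀ E, Eᵀ = -E → trace (Sᵀ * E) = 0 by
    simpa only [transpose_transpose] using transpose_eq_of_forall_trace_mul_skew_eq_zero h
  intro E hE
  have hloc := isLocalMin_mul_exp_smul (f := fun W => ∑ l, offDiagSq (Wᵀ * M l * W)) hV hE hη hmin
  have hderiv := HasDerivAt.fun_sum fun l (_ : l ∈ Finset.univ) =>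
    hasDerivAt_offDiagSq_transpose_exp_smul_mul_mul_exp_smul (Vᵀ * M l * V) E
  have hcrit := hloc.hasDerivAt_eq_zero <| hderiv.congr_of_eventuallyEq <|
    .of_forall fun t => by simp only [transpose_mul, Matrix.mul_assoc]
  calc trace (Sᵀ * E)
      = ∑ l, trace ((offDiag (Vᵀ * M l * V) * (Vᵀ * M l * V)ᵀ -
          (Vᵀ * M l * V)ᵀ * offDiag (Vᵀ * M l * V))ᵀ * E) := by
        simp only [S, transpose_sum, Finset.sum_mul, trace_sum]
    _ = -(1 / 2) * ∑ l, 2 * trace ((offDiag (Vᵀ * M l * V))ᵀ *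
          (Eᵀ * (Vᵀ * M l * V) + (Vᵀ * M l * V) * E)) := by
        rw [Finset.mul_sum]
        refine Finset.sum_congr rfl fun l _ => ?_
        rw [trace_transpose_mul_transpose_mul_add_of_skew _ _ _ hE]
        ring
    _ = 0 := by rw [hcrit, mul_zero]
end
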